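/- For the hypergraph dynamics ẋ = A x^{[k−1]} with output y = Cx, the j-th Lie derivative of the output (j ≥ 2) satisfies L_f^j g(x) = C A B_2 ⋯ B_j x^{[jk − (2j−1)]}, where B_p = Σ_{i=1}^{(p−1)k−(2p−3)} I ⊗ ⋯ ⊗ A ⊗ ⋯ ⊗ I with A in the i-th of (p−1)k−(2p−3) Kronecker positions. -/

import Mathlib

open scoped Classical

noncomputable section

/-- The `i`-fold Kronecker power of a vector `x ∈ ℝⁿ`, indexed by tuples
`Fin i → Fin n`. -/
def kronPow {n : ℕ} (x : Fin n → ℝ) (i : ℕ) : (Fin i → Fin n) → ℝ :=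
  fun j => ∏ t, x (j t)

/-- The Kronecker factor matrix `I ⊗ ⋯ ⊗ A ⊗ ⋯ ⊗ I`, with
`A ∈ ℝ^{n × n^{k-1}}` in the `i`-th of `m` factor positions and the `n × n`
identity in the others, as an `n^m × n^{m-1+(k-1)}` matrix indexed by tuples. -/
def kronFactor (n k m : ℕ) (A : Matrix (Fin n) (Fin (k - 1) → Fin n) ℝ) (i : Fin m) :
    Matrix (Fin m → Fin n) (Fin (m - 1 + (k - 1)) → Fin n) ℝ :=
  Matrix.of fun r c =>
    if ((∀ t : Fin m, (t : ℕ) < (i : ℕ) →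
          r t = if hp : (t : ℕ) < m - 1 + (k - 1) then c ⟨t, hp⟩ else r t) ∧
        (∀ t : Fin m, (i : ℕ) < (t : ℕ) →
          r t = if hp : (t : ℕ) - 1 + (k - 1) < m - 1 + (k - 1) then
              c ⟨(t : ℕ) - 1 + (k - 1), hp⟩ else r t))
    then A (r i) (fun s =>
      if hp : (i : ℕ) + (s : ℕ) < m - 1 + (k - 1) then c ⟨(i : ℕ) + (s : ℕ), hp⟩ else r i)
    else 0


/-- The Lie derivative of a scalar function `h` along a vector field `f` on
`ℝⁿ`: `L_f h (x) = ⟨dh(x), f(x)⟩`. -/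
def lieDeriv {n : ℕ} (f : (Fin n → ℝ) → (Fin n → ℝ)) (h : (Fin n → ℝ) → ℝ) :
    (Fin n → ℝ) → ℝ :=
  fun x => fderiv ℝ h x (f x)

/-- Iterated Lie derivatives: `L_f⁰ g = g`, `L_f^{j} g = L_f (L_f^{j-1} g)`. -/
def lieIter {n : ℕ} (f : (Fin n → ℝ) → (Fin n → ℝ)) :
    ℕ → ((Fin n → ℝ) → ℝ) → ((Fin n → ℝ) → ℝ)
  | 0, g => g
  | j + 1, g => lieDeriv f (lieIter f j g)

lemma dim_eq (k a : ℕ) (hk : 2 ≤ k) :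
    (a + 1) * (k - 2) + 1 - 1 + (k - 1) = (a + 1 + 1) * (k - 2) + 1 := by
  obtain ⟨q, rfl⟩ : ∃ q, k = q + 2 := ⟨k - 2, by omega⟩
  simp [Nat.add_sub_cancel, Nat.succ_mul]
  ring

/-- The matrix product `A B₂ ⋯ B_{a+1}`, where
`B_p = Σ_{i=1}^{(p-1)k-(2p-3)} I ⊗ ⋯ ⊗ A ⊗ ⋯ ⊗ I` has `A` in the `i`-th of
`(p-1)k-(2p-3) = (p-1)(k-2)+1` Kronecker positions. -/
def Pmat (n k : ℕ) (hk : 2 ≤ k) (A : Matrix (Fin n) (Fin (k - 1) → Fin n) ℝ) :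
    (a : ℕ) → Matrix (Fin n) (Fin ((a + 1) * (k - 2) + 1) → Fin n) ℝ
  | 0 => A.submatrix id (fun c => c ∘ Fin.cast (show k - 1 = (0 + 1) * (k - 2) + 1 by omega))
  | a + 1 =>
    ((Pmat n k hk A a) *
        (∑ i : Fin ((a + 1) * (k - 2) + 1), kronFactor n k ((a + 1) * (k - 2) + 1) A i)).submatrix
      id (fun c => c ∘ Fin.cast (dim_eq k a hk))

/-- embedding of the middle block -/
def emb {n k M : ℕ} (hk : 2 ≤ k) (r : Fin M → Fin n) (i : Fin M)
    (c : Fin (k - 1) → Fin n) : Fin (M - 1 + (k - 1)) → Fin n := fun u =>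
  if h1 : (u : ℕ) < i then r ⟨u, by have := i.isLt; omega⟩
  else if h2 : (u : ℕ) < i + (k - 1) then c ⟨(u : ℕ) - i, by omega⟩
  else r ⟨(u : ℕ) - (k - 1) + 1, by have := u.isLt; omega⟩

lemma emb_inj {n k M : ℕ} (hk : 2 ≤ k) (r : Fin M → Fin n) (i : Fin M) :
    Function.Injective (emb (n := n) hk r i) := by
  have hi := i.isLt
  intro c1 c2 h
  funext s
  have hs := s.isLt
  have hlt : (i : ℕ) + (s : ℕ) < M - 1 + (k - 1) := by omega
  have := congrFun h ⟨(i : ℕ) + s, hlt⟩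
  simp only [emb] at this
  rw [dif_neg (by omega), dif_pos (by omega), dif_neg (by omega),
    dif_pos (by omega)] at this
  have harg : ((i : ℕ) + (s : ℕ) - i) = (s : ℕ) := by omega
  simpa [harg, Fin.ext_iff] using this

lemma kronFactor_emb {n k M : ℕ} (hk : 2 ≤ k) (A : Matrix (Fin n) (Fin (k - 1) → Fin n) ℝ)
    (r : Fin M → Fin n) (i : Fin M) (c : Fin (k - 1) → Fin n) :
    kronFactor n k M A i r (emb hk r i c) = A (r i) c := by
  have hi := i.isLt
  simp only [kronFactor, Matrix.of_apply]
  rw [if_pos]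
  · congr 1
    funext s
    have hs := s.isLt
    rw [dif_pos (by omega)]
    simp only [emb]
    rw [dif_neg (by omega), dif_pos (by omega)]
    congr 1
    simp [Fin.ext_iff]
  · constructor
    · intro t ht
      have h2 := t.isLt
      rw [dif_pos (by omega)]
      simp only [emb]
      rw [dif_pos (by omega)]
    · intro t ht
      have h2 := t.isLt
      rw [dif_pos (by omega)]
      simp only [emb]
      rw [dif_neg (by omega), dif_neg (by omega)]
      congr 1
      simp [Fin.ext_iff]; omega

lemma kronFactor_eq_zero {n k M : ℕ} (hk : 2 ≤ k) (A : Matrix (Fin n) (Fin (k - 1) → Fin n) ℝ)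
    (r : Fin M → Fin n) (i : Fin M) (c' : Fin (M - 1 + (k - 1)) → Fin n)
    (h : ∀ c, emb hk r i c ≠ c') : kronFactor n k M A i r c' = 0 := by
  have hi := i.isLt
  simp only [kronFactor, Matrix.of_apply]
  rw [if_neg]
  intro ⟨h1, h2⟩
  apply h (fun s => c' ⟨(i : ℕ) + s, by have := s.isLt; omega⟩)
  funext u
  have hu := u.isLt
  simp only [emb]
  split_ifs with g1 g2
  · have := h1 ⟨u, by omega⟩ g1
    rw [dif_pos (by omega)] at this
    rw [this]
  · congr 1
    simp [Fin.ext_iff]; omega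
  · have : (i : ℕ) < (u : ℕ) - (k - 1) + 1 := by omega
    have h3 := h2 ⟨(u : ℕ) - (k - 1) + 1, by omega⟩ this
    rw [dif_pos (by omega)] at h3
    rw [h3]; congr 1; simp [Fin.ext_iff]; omega

lemma kronPow_emb {n k M : ℕ} (hk : 2 ≤ k) (x : Fin n → ℝ)
    (r : Fin M → Fin n) (i : Fin M) (c : Fin (k - 1) → Fin n) :
    kronPow x (M - 1 + (k - 1)) (emb hk r i c)
      = (∏ t ∈ Finset.univ.erase i, x (r t)) * kronPow x (k - 1) c := by
  have hi := i.isLt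
  have hk1 : 1 ≤ k - 1 := by omega
  classical
  set S2 : Finset (Fin (M - 1 + (k - 1))) :=
    Finset.univ.filter (fun u => (i : ℕ) ≤ u ∧ (u : ℕ) < i + (k - 1)) with hS2
  have hmem : ∀ u : Fin (M - 1 + (k - 1)), u ∈ S2 ↔ ((i : ℕ) ≤ u ∧ (u : ℕ) < i + (k - 1)) := by
    intro u; simp [hS2]
  have hmemc : ∀ u : Fin (M - 1 + (k - 1)), u ∈ S2ᶜ ↔ ¬((i : ℕ) ≤ u ∧ (u : ℕ) < i + (k - 1)) := by
    intro u; simp [hS2]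
  have hsplit : kronPow x (M - 1 + (k - 1)) (emb hk r i c)
      = (∏ u ∈ S2, x (emb hk r i c u)) * ∏ u ∈ S2ᶜ, x (emb hk r i c u) :=
    (Finset.prod_mul_prod_compl S2 _).symm
  have h2 : (∏ u ∈ S2, x (emb hk r i c u)) = kronPow x (k - 1) c := by
    refine Finset.prod_bij'
      (fun u hu => (⟨(u : ℕ) - i, by rw [hmem] at hu; omega⟩ : Fin (k - 1)))
      (fun s _ => (⟨(i : ℕ) + s, by have := s.isLt; omega⟩ : Fin (M - 1 + (k - 1))))
      ?_ ?_ ?_ ?_ ?_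
    · intro u hu; exact Finset.mem_univ _
    · intro s hs; rw [hmem]; have := s.isLt; simp
    · intro u hu; rw [hmem] at hu; simp [Fin.ext_iff]; omega
    · intro s hs; simp [Fin.ext_iff]
    · intro u hu
      rw [hmem] at hu
      have g1 : ¬ ((u : ℕ) < (i : ℕ)) := by omega
      have g2 : (u : ℕ) < (i : ℕ) + (k - 1) := by omega
      simp [emb, g1, g2]
  have h3 : (∏ u ∈ S2ᶜ, x (emb hk r i c u)) = ∏ t ∈ Finset.univ.erase i, x (r t) := by
    refine Finset.prod_bij'
      (fun u hu => if h : (u : ℕ) < i then (⟨u, by omega⟩ : Fin M)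
        else ⟨(u : ℕ) - (k - 1) + 1,
          by rw [hmemc] at hu; have := u.isLt; omega⟩)
      (fun t ht => if h : (t : ℕ) < i then (⟨t, by omega⟩ : Fin (M - 1 + (k - 1)))
        else ⟨(t : ℕ) - 1 + (k - 1), by
          have h1 := t.isLt
          simp only [Finset.mem_erase, Finset.mem_univ, and_true] at ht
          have h2 : (t : ℕ) ≠ i := fun hh => ht (Fin.ext hh)
          omega⟩)
      ?_ ?_ ?_ ?_ ?_
    · intro u hu
      rw [hmemc] at hu
      have hu2 := u.isLt
      simp only [Finset.mem_erase, Finset.mem_univ, and_true]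
      by_cases g1 : (u : ℕ) < i <;> simp [g1, Fin.ext_iff] <;> omega
    · intro t ht
      simp only [Finset.mem_erase, Finset.mem_univ, and_true] at ht
      have hti : (t : ℕ) ≠ i := fun h => ht (Fin.ext h)
      have ht2 := t.isLt
      rw [hmemc]
      by_cases g1 : (t : ℕ) < i <;> simp [g1] <;> omega
    · intro u hu
      rw [hmemc] at hu
      have hu2 := u.isLt
      by_cases g1 : (u : ℕ) < i
      · simp [g1, Fin.ext_iff]
      · have g2 : ¬ ((u : ℕ) - (k - 1) + 1 < (i : ℕ)) := by omega
        simp [g1, g2, Fin.ext_iff]; omega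
    · intro t ht
      simp only [Finset.mem_erase, Finset.mem_univ, and_true] at ht
      have hti : (t : ℕ) ≠ i := fun h => ht (Fin.ext h)
      have ht2 := t.isLt
      by_cases g1 : (t : ℕ) < i
      · simp [g1, Fin.ext_iff]
      · have g2 : ¬ ((t : ℕ) - 1 + (k - 1) < (i : ℕ)) := by omega
        simp [g1, g2, Fin.ext_iff]; omega
    · intro u hu
      rw [hmemc] at hu
      have hu2 := u.isLt
      by_cases g1 : (u : ℕ) < i
      · simp [emb, g1]
      · have g2 : ¬ ((u : ℕ) < (i : ℕ) + (k - 1)) := by omega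
        simp [emb, g1, g2]
  rw [hsplit, h2, h3, mul_comm]

lemma block {n k M : ℕ} (hk : 2 ≤ k) (A : Matrix (Fin n) (Fin (k - 1) → Fin n) ℝ)
    (x : Fin n → ℝ) (r : Fin M → Fin n) (i : Fin M) :
    ∑ c, kronFactor n k M A i r c * kronPow x (M - 1 + (k - 1)) c
      = (∏ t ∈ Finset.univ.erase i, x (r t))
          * ∑ c, A (r i) c * kronPow x (k - 1) c := by
  classical
  rw [show (Finset.univ : Finset (Fin (M - 1 + (k - 1)) → Fin n)) =
      Finset.univ \ (Finset.univ.image (emb hk r i))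
        ∪ Finset.univ.image (emb hk r i) by
    rw [Finset.sdiff_union_of_subset (Finset.subset_univ _)]]
  rw [Finset.sum_union (Finset.sdiff_disjoint)]
  have hzero : ∀ c' ∈ Finset.univ \ Finset.univ.image (emb hk r i),
      kronFactor n k M A i r c' * kronPow x (M - 1 + (k - 1)) c' = 0 := by
    intro c' hc'
    simp only [Finset.mem_sdiff, Finset.mem_image, Finset.mem_univ, true_and] at hc'
    rw [kronFactor_eq_zero hk A r i c' (fun c hc => hc' ⟨c, hc⟩), zero_mul]
  rw [Finset.sum_eq_zero hzero, zero_add,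
    Finset.sum_image (fun c1 _ c2 _ h => emb_inj hk r i h)]
  rw [Finset.mul_sum]
  congr 1
  funext c
  rw [kronFactor_emb hk A r i c, kronPow_emb hk x r i c]
  ring

lemma key {n k M : ℕ} (hk : 2 ≤ k) (A : Matrix (Fin n) (Fin (k - 1) → Fin n) ℝ)
    (w : (Fin M → Fin n) → ℝ) (x : Fin n → ℝ) :
    ∑ r, w r * ∑ i : Fin M, (∏ t ∈ Finset.univ.erase i, x (r t))
        * (A.mulVec (kronPow x (k - 1))) (r i)
      = ∑ c, Matrix.vecMul w (∑ i, kronFactor n k M A i) c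
          * kronPow x (M - 1 + (k - 1)) c := by
  classical
  have hrhs : ∀ c, Matrix.vecMul w (∑ i, kronFactor n k M A i) c
      = ∑ r, ∑ i, w r * kronFactor n k M A i r c := by
    intro c
    simp [Matrix.vecMul, dotProduct, Matrix.sum_apply, Finset.mul_sum]
  simp only [hrhs, Finset.sum_mul]
  rw [Finset.sum_comm]
  apply Finset.sum_congr rfl
  intro r _
  rw [Finset.sum_comm, Finset.mul_sum]
  apply Finset.sum_congr rfl
  intro i _
  have := block hk A x r i
  calc w r * ((∏ t ∈ Finset.univ.erase i, x (r t)) * (A.mulVec (kronPow x (k - 1))) (r i))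
      = w r * ((∏ t ∈ Finset.univ.erase i, x (r t))
          * ∑ c, A (r i) c * kronPow x (k - 1) c) := by
        simp [Matrix.mulVec, dotProduct, kronPow]
    _ = w r * ∑ c, kronFactor n k M A i r c * kronPow x (M - 1 + (k - 1)) c := by rw [this]
    _ = ∑ c, w r * kronFactor n k M A i r c * kronPow x (M - 1 + (k - 1)) c := by
        rw [Finset.mul_sum]; simp [mul_assoc]

lemma fderiv_poly {n M : ℕ} (w : (Fin M → Fin n) → ℝ) (x v : Fin n → ℝ) :
    (fderiv ℝ (fun y => ∑ r, w r * kronPow y M r) x) v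
      = ∑ r, w r * ∑ i, (∏ t ∈ Finset.univ.erase i, x (r t)) * v (r i) := by
  classical
  have hyp : ∀ r : Fin M → Fin n, HasFDerivAt (fun y : Fin n → ℝ => kronPow y M r)
      (∑ i, (∏ t ∈ Finset.univ.erase i, x (r t)) •
        (ContinuousLinearMap.proj (R := ℝ) (φ := fun _ : Fin n => ℝ) (r i))) x := by
    intro r
    exact HasFDerivAt.finset_prod (fun i _ =>
      (ContinuousLinearMap.proj (R := ℝ) (φ := fun _ : Fin n => ℝ) (r i)).hasFDerivAt)
  have h : HasFDerivAt (fun y => ∑ r, w r * kronPow y M r)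
      (∑ r, w r • (∑ i, (∏ t ∈ Finset.univ.erase i, x (r t)) •
        (ContinuousLinearMap.proj (R := ℝ) (φ := fun _ : Fin n => ℝ) (r i)))) x := by
    exact HasFDerivAt.fun_sum (fun r _ => ((hyp r).const_mul (w r)).congr_fderiv (by
      ext z; simp [smul_smul]))
  rw [h.fderiv]
  simp [Finset.mul_sum]

lemma fderiv_linear {n : ℕ} (c : Fin n → ℝ) (x v : Fin n → ℝ) :
    (fderiv ℝ (fun y : Fin n → ℝ => ∑ p, c p * y p) x) v = ∑ p, c p * v p := by
  classical
  have h : HasFDerivAt (fun y : Fin n → ℝ => ∑ p, c p * y p)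
      (∑ p, c p • (ContinuousLinearMap.proj (R := ℝ) (φ := fun _ : Fin n => ℝ) p)) x :=
    HasFDerivAt.fun_sum (fun p _ =>
      (ContinuousLinearMap.proj (R := ℝ) (φ := fun _ : Fin n => ℝ) p).hasFDerivAt.const_mul (c p))
  rw [h.fderiv]
  simp

lemma sum_cast {n D1 D2 : ℕ} (h : D1 = D2) (g : (Fin D1 → Fin n) → ℝ) (x : Fin n → ℝ) :
    ∑ c : Fin D2 → Fin n, g (c ∘ Fin.cast h) * kronPow x D2 c
      = ∑ c : Fin D1 → Fin n, g c * kronPow x D1 c := by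
  subst h
  simp [Function.comp]

lemma main {n k m : ℕ} (hk : 2 ≤ k) (A : Matrix (Fin n) (Fin (k - 1) → Fin n) ℝ)
    (C : Matrix (Fin m) (Fin n) ℝ) (a' : Fin m) : ∀ (a : ℕ) (x : Fin n → ℝ),
    lieIter (fun y => A.mulVec (kronPow y (k - 1))) (a + 1) (fun y => C.mulVec y a') x
      = C.mulVec ((Pmat n k hk A a).mulVec (kronPow x ((a + 1) * (k - 2) + 1))) a' := by
  classical
  intro a
  induction a with
  | zero =>
    intro x
    show lieDeriv _ (fun y => C.mulVec y a') x = _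
    simp only [lieDeriv]
    have hg : (fun y : Fin n → ℝ => C.mulVec y a') = fun y => ∑ p, C a' p * y p := by
      funext y; simp [Matrix.mulVec, dotProduct]
    rw [hg, fderiv_linear]
    have hA : (Pmat n k hk A 0).mulVec (kronPow x ((0 + 1) * (k - 2) + 1))
        = A.mulVec (kronPow x (k - 1)) := by
      funext p
      show dotProduct _ _ = dotProduct _ _
      simp only [dotProduct, Pmat, Matrix.submatrix_apply, id_eq]
      exact sum_cast (show k - 1 = (0 + 1) * (k - 2) + 1 by omega) (A p) x
    rw [hA]
    simp [Matrix.mulVec, dotProduct]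
  | succ a IH =>
    intro x
    show lieDeriv _ (lieIter _ (a + 1) _) x = _
    simp only [lieDeriv]
    set w : (Fin ((a + 1) * (k - 2) + 1) → Fin n) → ℝ :=
      fun r => ∑ p, C a' p * Pmat n k hk A a p r with hw
    have hfun : lieIter (fun y => A.mulVec (kronPow y (k - 1))) (a + 1)
        (fun y => C.mulVec y a')
        = fun y => ∑ r, w r * kronPow y ((a + 1) * (k - 2) + 1) r := by
      funext y
      rw [IH y]
      simp only [hw, Matrix.mulVec, dotProduct, Finset.mul_sum, Finset.sum_mul,
        mul_assoc]
      exact Finset.sum_comm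
    rw [hfun, fderiv_poly, key hk A w x]
    -- now handle the RHS
    have hG : ∀ c', Matrix.vecMul w
        (∑ i : Fin ((a + 1) * (k - 2) + 1), kronFactor n k ((a + 1) * (k - 2) + 1) A i) c'
        = ∑ p, C a' p * ((Pmat n k hk A a) *
            (∑ i : Fin ((a + 1) * (k - 2) + 1), kronFactor n k ((a + 1) * (k - 2) + 1) A i)) p c' := by
      intro c'
      simp only [hw, Matrix.vecMul, dotProduct, Matrix.mul_apply, Finset.mul_sum,
        Finset.sum_mul, mul_assoc]
      exact Finset.sum_comm
    simp only [hG]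
    have hR : C.mulVec ((Pmat n k hk A (a + 1)).mulVec
          (kronPow x ((a + 1 + 1) * (k - 2) + 1))) a'
        = ∑ c, (∑ p, C a' p * ((Pmat n k hk A a) *
            (∑ i : Fin ((a + 1) * (k - 2) + 1), kronFactor n k ((a + 1) * (k - 2) + 1) A i))
              p (c ∘ Fin.cast (dim_eq k a hk)))
            * kronPow x ((a + 1 + 1) * (k - 2) + 1) c := by
      simp only [Pmat, Matrix.mulVec, dotProduct, Matrix.submatrix_apply, id_eq,
        Finset.mul_sum, Finset.sum_mul, mul_assoc]
      exact Finset.sum_comm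
    rw [hR]
    exact (sum_cast (dim_eq k a hk) _ x).symm

/-- For the hypergraph dynamics `ẋ = A x^{[k-1]}` with output `y = Cx`, the
`j`-th Lie derivative of the output (`j ≥ 2`) satisfies
`L_f^j g(x) = C A B₂ ⋯ B_j x^{[jk-(2j-1)]}`, where
`B_p = Σ_i I ⊗ ⋯ ⊗ A ⊗ ⋯ ⊗ I` with `A` in the `i`-th of `(p-1)k-(2p-3)`
Kronecker positions (note `jk - (2j-1) = j(k-2)+1`, and `A B₂ ⋯ B_j`
corresponds to `Pmat` at `a = j - 1`, so `j = (j-1)+1`). -/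
theorem lieIter_output (n k m : ℕ) (hk : 2 ≤ k)
    (A : Matrix (Fin n) (Fin (k - 1) → Fin n) ℝ)
    (C : Matrix (Fin m) (Fin n) ℝ) (j : ℕ) (hj : 2 ≤ j) (a : Fin m) (x : Fin n → ℝ) :
    lieIter (fun y => A.mulVec (kronPow y (k - 1))) j (fun y => C.mulVec y a) x
      = C.mulVec ((Pmat n k hk A (j - 1)).mulVec
          (kronPow x ((j - 1 + 1) * (k - 2) + 1))) a := by
  obtain ⟨b, rfl⟩ : ∃ b, j = b + 1 := ⟨j - 1, by omega⟩
  simpa using main hk A C a b x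

end
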